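/- (Integrality-gap transfer.) Let OPT1, OPT2, SDP1, SDP2 : ℝ → ℝ and α ≥ 0 satisfy: (i) OPT1 is nondecreasing; (ii) SDP2(SDP1(κ)) ≤ κ for all κ; (iii) OPT1(OPT2(β)) ≥ β for all β; (iv) OPT2(β) ≤ α·SDP2(β) for all β. Then SDP1(κ) ≤ OPT1(α·κ) for every κ ∈ ℝ. -/
import Mathlib

/-- Integrality-gap transfer: if `OPT1` is nondecreasing,
`SDP2(SDP1(κ)) ≤ κ`, `OPT1(OPT2(β)) ≥ β`, and `OPT2(β) ≤ α·SDP2(β)` with `α ≥ 0`, then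
`SDP1(κ) ≤ OPT1(α·κ)` for every `κ`. -/
theorem integrality_gap_transfer (OPT1 OPT2 SDP1 SDP2 : ℝ → ℝ) (α : ℝ) (hα : 0 ≤ α)
    (h1 : Monotone OPT1)
    (h2 : ∀ κ : ℝ, SDP2 (SDP1 κ) ≤ κ)
    (h3 : ∀ β : ℝ, β ≤ OPT1 (OPT2 β))
    (h4 : ∀ β : ℝ, OPT2 β ≤ α * SDP2 β) :
    ∀ κ : ℝ, SDP1 κ ≤ OPT1 (α * κ) := by
  intro κ
  calc SDP1 κ ≤ OPT1 (OPT2 (SDP1 κ)) := h3 _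
    _ ≤ OPT1 (α * SDP2 (SDP1 κ)) := h1 (h4 _)
    _ ≤ OPT1 (α * κ) := h1 (mul_le_mul_of_nonneg_left (h2 κ) hα)
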